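/- Let k ≥ 2 and let λ_0 > λ_1 > … > λ_{2k−1} be the 2k real numbers λ_i = k−i and λ_{k+i} = −(i+1) for 0 ≤ i < k, and set π_i = ∏_{j=0, j≠i}^{2k−1} |λ_i − λ_j|. Then for all 0 ≤ i < k, π_0/π_i = π_0/π_{2k−(i+1)} = ((k−i)/k)·C(2k, i). -/

import Mathlib

/-!
Adjoining the missing value `0` turns the `λ_j` into the progression `k, k - 1, …, -k`:
`λ_j = k - s j`, where `s = Fin.succAbove k` skips position `k`. In a progression of step `1`
the distance product at position `s` is `s! (2k - s)!`, so `π_j |λ_j| = (s j)! (2k - s j)!`.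
Hence `π_0 = (2k)!/k` and `π_i = π_{2k-1-i} = i! (2k - i)!/(k - i)` for `i < k`.
-/

open Finset Nat

theorem Fin.prod_univ_erase_succAbove {M : Type*} [CommMonoid M] {n : ℕ}
    (f : Fin (n + 1) → M) (p : Fin (n + 1)) (i : Fin n) :
    ∏ j ∈ univ.erase (p.succAbove i), f j = f p * ∏ j ∈ univ.erase i, f (p.succAbove j) := by
  rw [Fin.univ_succAbove n p, erase_cons_of_ne _ (p.succAbove_ne i).symm, Finset.prod_cons,
    ← Fin.coe_succAboveEmb, ← map_erase, prod_map]

lemma prod_range_abs_sub (q : ℕ) : ∏ n ∈ range q, |(q : ℝ) - n| = q ! := by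
  induction q with
  | zero => simp
  | succ q ih =>
    rw [prod_range_succ', factorial_succ]
    push_cast
    simp only [add_sub_add_right_eq_sub, ih, sub_zero]
    rw [abs_of_nonneg (by positivity)]
    ring

lemma prod_range_erase_abs_sub (q r : ℕ) :
    ∏ n ∈ (range (q + r + 1)).erase q, |(q : ℝ) - n| = q ! * r ! := by
  induction r with
  | zero => simp [range_add_one, prod_range_abs_sub]
  | succ r ih =>
    rw [show q + (r + 1) + 1 = q + r + 1 + 1 by ring, range_add_one,
      erase_insert_of_ne (by omega), prod_insert (by simp), ih, factorial_succ]
    push_cast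
    rw [abs_sub_comm, abs_of_nonneg (by linarith)]
    ring

lemma Fin.prod_univ_erase_abs_sub {N : ℕ} (q : Fin (N + 1)) :
    ∏ n ∈ univ.erase q, |(q : ℝ) - n| = (q : ℕ)! * (N - q)! := by
  have hq : N + 1 = q + (N - q) + 1 := by omega
  rw [← prod_range_erase_abs_sub, ← hq, ← Nat.Iio_eq_range, ← Fin.map_valEmbedding_univ,
    ← Fin.valEmbedding_apply, ← map_erase, prod_map]

lemma prod_erase_abs_sub_mul_abs_sub_succAbove {N : ℕ} (p : Fin (N + 1)) (c : ℝ)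
    (lam : Fin N → ℝ) (hlam : ∀ j, lam j = c - p.succAbove j) (i : Fin N) :
    (∏ j ∈ univ.erase i, |lam i - lam j|) * |lam i - (c - p)| =
      (p.succAbove i : ℕ)! * (N - p.succAbove i)! := by
  rw [← Fin.prod_univ_erase_abs_sub, Fin.prod_univ_erase_succAbove, mul_comm]
  simp only [hlam, sub_sub_sub_cancel_left, abs_sub_comm (p : ℝ)]
  congr 1
  exact prod_congr rfl fun j _ => abs_sub_comm _ _

lemma val_succAbove_mk {n k : ℕ} (hk : k < n + 1) (j : Fin n) :
    ((⟨k, hk⟩ : Fin (n + 1)).succAbove j : ℕ) = if (j : ℕ) < k then (j : ℕ) else (j : ℕ) + 1 := by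
  unfold Fin.succAbove
  split_ifs <;> simp_all [Fin.lt_def]

lemma eq_sub_succAbove_of_pos_of_neg {k : ℕ} (lam : Fin (2 * k) → ℝ)
    (hlam₁ : ∀ j : Fin (2 * k), (j : ℕ) < k → lam j = k - j)
    (hlam₂ : ∀ (j : Fin (2 * k)) (t : ℕ), (j : ℕ) = k + t → lam j = -((t : ℝ) + 1))
    (j : Fin (2 * k)) :
    lam j = k - (⟨k, by omega⟩ : Fin (2 * k + 1)).succAbove j := by
  rw [val_succAbove_mk]
  split_ifs with h
  · exact hlam₁ j h
  · obtain ⟨t, ht⟩ := Nat.exists_eq_add_of_le (not_lt.mp h)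
    rw [hlam₂ j t ht, ht]
    push_cast
    ring

lemma div_eq_sub_div_mul_choose {k i : ℕ} (hi : i < k) {a b : ℝ} (ha : a * k = (2 * k)!)
    (hb : b * |(k : ℝ) - i| = i ! * (2 * k - i)!) :
    a / b = ((k : ℝ) - i) / k * (2 * k).choose i := by
  have hki : (0 : ℝ) < k - i := sub_pos.mpr (by exact_mod_cast hi)
  have hk : (0 : ℝ) < k := Nat.cast_pos.mpr (by omega)
  rw [abs_of_pos hki, ← eq_div_iff hki.ne'] at hb
  rw [← eq_div_iff hk.ne'] at ha
  rw [ha, hb, Nat.cast_choose ℝ (by omega : i ≤ 2 * k)]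
  field_simp

/-- For the `2k` numbers `λ_i = k - i`, `λ_{k+i} = -(i+1)` (`0 ≤ i < k`) and
`π_i = ∏_{j ≠ i} |λ_i - λ_j|`, one has
`π_0/π_i = π_0/π_{2k-(i+1)} = ((k-i)/k)·C(2k, i)` for all `0 ≤ i < k`. -/
theorem pi_ratio_formula (k : ℕ) (hk : 2 ≤ k)
    (lam : Fin (2 * k) → ℝ)
    (hlam₁ : ∀ i : ℕ, ∀ hi : i < k, lam ⟨i, by omega⟩ = (k : ℝ) - i)
    (hlam₂ : ∀ i : ℕ, ∀ hi : i < k, lam ⟨k + i, by omega⟩ = -((i : ℝ) + 1))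
    (pi : Fin (2 * k) → ℝ)
    (hpi : ∀ i, pi i = ∏ j ∈ Finset.univ.erase i, |lam i - lam j|) :
    ∀ i : ℕ, ∀ hi : i < k,
      pi ⟨0, by omega⟩ / pi ⟨i, by omega⟩ =
        (((k : ℝ) - i) / k) * Nat.choose (2 * k) i ∧
      pi ⟨0, by omega⟩ / pi ⟨2 * k - (i + 1), by omega⟩ =
        (((k : ℝ) - i) / k) * Nat.choose (2 * k) i := by
  intro i hi
  have hlam := eq_sub_succAbove_of_pos_of_neg lam (fun j hj => hlam₁ j hj) fun ⟨_, _⟩ t ht => by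
    subst ht
    exact hlam₂ t (by omega)
  have key (j : Fin (2 * k)) :
      pi j * |lam j| = (((⟨k, by omega⟩ : Fin (2 * k + 1)).succAbove j : ℕ)! : ℝ) *
        (2 * k - (⟨k, by omega⟩ : Fin (2 * k + 1)).succAbove j)! := by
    simpa [hpi] using prod_erase_abs_sub_mul_abs_sub_succAbove _ _ lam hlam j
  have h0 := key ⟨0, by omega⟩
  have h1 := key ⟨i, by omega⟩
  have h2 := key ⟨2 * k - (i + 1), by omega⟩
  have hk0 : 0 < k := by omega
  simp only [hlam, val_succAbove_mk, hk0, hi, show ¬ 2 * k - (i + 1) < k by omega, ↓reduceIte,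
    show 2 * k - (i + 1) + 1 = 2 * k - i by omega, CharP.cast_eq_zero, sub_zero, abs_cast,
    factorial_zero, cast_one, tsub_zero, one_mul] at h0 h1 h2
  rw [Nat.cast_sub (by omega), show (k : ℝ) - ((2 * k : ℕ) - i) = -(k - i) by push_cast; ring,
    abs_neg, show 2 * k - (2 * k - i) = i by omega, mul_comm ((2 * k - i)! : ℝ)] at h2
  exact ⟨div_eq_sub_div_mul_choose hi h0 h1, div_eq_sub_div_mul_choose hi h0 h2⟩
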